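/- The measure M on terms of Polymorphic System I is invariant under the structural equivalence ⇄: if r ⇄ s then M(r) = M(s). -/
import Mathlib


/-- Types of Polymorphic System I: variables, arrows, conjunctions, universal types. -/
inductive Ty : Type
  | var : ℕ → Ty
  | arr : Ty → Ty → Ty
  | conj : Ty → Ty → Ty
  | all : ℕ → Ty → Ty
deriving DecidableEq

/-- Free type variables. -/
def ftv : Ty → Finset ℕ
  | .var X => {X}
  | .arr A B => ftv A ∪ ftv B
  | .conj A B => ftv A ∪ ftv B
  | .all X A => ftv A \ {X}

/-- Type isomorphism ≡: the smallest congruence generated by the six isomorphisms of PSI. -/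
inductive TyEquiv : Ty → Ty → Prop
  | comm (A B) : TyEquiv (.conj A B) (.conj B A)
  | assoc (A B C) : TyEquiv (.conj A (.conj B C)) (.conj (.conj A B) C)
  | distArr (A B C) : TyEquiv (.arr A (.conj B C)) (.conj (.arr A B) (.arr A C))
  | curry (A B C) : TyEquiv (.arr (.conj A B) C) (.arr A (.arr B C))
  | allArr (X A B) : X ∉ ftv A → TyEquiv (.all X (.arr A B)) (.arr A (.all X B))
  | allConj (X A B) : TyEquiv (.all X (.conj A B)) (.conj (.all X A) (.all X B))
  | refl (A) : TyEquiv A A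
  | symm {A B} : TyEquiv A B → TyEquiv B A
  | trans {A B C} : TyEquiv A B → TyEquiv B C → TyEquiv A C
  | congArr {A A' B B'} : TyEquiv A A' → TyEquiv B B' → TyEquiv (.arr A B) (.arr A' B')
  | congConj {A A' B B'} : TyEquiv A A' → TyEquiv B B' → TyEquiv (.conj A B) (.conj A' B')
  | congAll (X) {A B} : TyEquiv A B → TyEquiv (.all X A) (.all X B)

/-- Auxiliary for PF: turn ∀X⃗.(C ⇒ Y) into ∀X⃗.((A ∧ C) ⇒ Y). -/
def pushArr (A : Ty) : Ty → Ty
  | .all X t => .all X (pushArr A t)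
  | .arr C Y => .arr (.conj A C) Y
  | t => t

/-- Multiset of prime factors of a type. -/
def PF : Ty → Multiset Ty
  | .var X => {.var X}
  | .arr A B => (PF B).map (pushArr A)
  | .conj A B => PF A + PF B
  | .all X A => (PF A).map (.all X)

/-- Being of the form ∀X₁...∀Xₙ.(B ⇒ Y) with Y a type variable. -/
inductive IsPrimeForm : Ty → Prop
  | base (B Y) : IsPrimeForm (.arr B (.var Y))
  | step (X) {t} : IsPrimeForm t → IsPrimeForm (.all X t)

/-- Conjunction of a (nonempty) list of types, A₁ ∧ ... ∧ Aₙ. -/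
def conjList : List Ty → Ty
  | [] => .var 0
  | [A] => A
  | A :: l => .conj A (conjList l)

/-- ∀X₁...∀Xₙ.A -/
def allList (l : List ℕ) (A : Ty) : Ty := l.foldr .all A

/-- Substitution of a type for a type variable in a type. -/
def substTy (X : ℕ) (B : Ty) : Ty → Ty
  | .var Y => if Y = X then B else .var Y
  | .arr C D => .arr (substTy X B C) (substTy X B D)
  | .conj C D => .conj (substTy X B C) (substTy X B D)
  | .all Y C => if Y = X then .all Y C else .all Y (substTy X B C)

/-- Terms of PSI (Church style). -/
inductive Tm : Type
  | var : ℕ → Ty → Tm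
  | lam : ℕ → Ty → Tm → Tm
  | app : Tm → Tm → Tm
  | pair : Tm → Tm → Tm
  | proj : Ty → Tm → Tm
  | tlam : ℕ → Tm → Tm
  | tapp : Tm → Ty → Tm

/-- Substitution of a term for a term variable. -/
def substTm (x : ℕ) (s : Tm) : Tm → Tm
  | .var y A => if y = x then s else .var y A
  | .lam y A r => if y = x then .lam y A r else .lam y A (substTm x s r)
  | .app r t => .app (substTm x s r) (substTm x s t)
  | .pair r t => .pair (substTm x s r) (substTm x s t)
  | .proj A r => .proj A (substTm x s r)
  | .tlam X r => .tlam X (substTm x s r)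
  | .tapp r A => .tapp (substTm x s r) A

/-- Substitution of a type for a type variable in a term. -/
def substTyTm (X : ℕ) (B : Ty) : Tm → Tm
  | .var y A => .var y (substTy X B A)
  | .lam y A r => .lam y (substTy X B A) (substTyTm X B r)
  | .app r t => .app (substTyTm X B r) (substTyTm X B t)
  | .pair r t => .pair (substTyTm X B r) (substTyTm X B t)
  | .proj A r => .proj (substTy X B A) (substTyTm X B r)
  | .tlam Y r => if Y = X then .tlam Y r else .tlam Y (substTyTm X B r)
  | .tapp r A => .tapp (substTyTm X B r) (substTy X B A)

abbrev Ctx := List (ℕ × Ty)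

def ftvCtx (Γ : Ctx) : Finset ℕ := Γ.foldr (fun p s => ftv p.2 ∪ s) ∅

def substCtx (X : ℕ) (B : Ty) (Γ : Ctx) : Ctx := Γ.map (fun p => (p.1, substTy X B p.2))

/-- Typing relation of PSI. -/
inductive Typing : Ctx → Tm → Ty → Prop
  | ax {Γ x A} : (x, A) ∈ Γ → Typing Γ (.var x A) A
  | equiv {Γ r A B} : Typing Γ r A → TyEquiv A B → Typing Γ r B
  | arrI {Γ x A r B} : Typing ((x, A) :: Γ) r B → Typing Γ (.lam x A r) (.arr A B)
  | arrE {Γ r s A B} : Typing Γ r (.arr A B) → Typing Γ s A → Typing Γ (.app r s) B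
  | conjI {Γ r s A B} : Typing Γ r A → Typing Γ s B → Typing Γ (.pair r s) (.conj A B)
  | conjE {Γ r A B} : Typing Γ r (.conj A B) → Typing Γ (.proj A r) A
  | allI {Γ r X A} : Typing Γ r A → X ∉ ftvCtx Γ → Typing Γ (.tlam X r) (.all X A)
  | allE {Γ r X A B} : Typing Γ r (.all X A) → Typing Γ (.tapp r B) (substTy X B A)

/-- "r has type A" (context is redundant in Church style). -/
def HasTy (r : Tm) (A : Ty) : Prop := ∃ Γ, Typing Γ r A

/-- One-step structural equivalence ⇄ (symmetric, closed under all term contexts). -/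
inductive StEq : Tm → Tm → Prop
  | comm (r s) : StEq (.pair r s) (.pair s r)
  | assoc (r s t) : StEq (.pair r (.pair s t)) (.pair (.pair r s) t)
  | distLam (x A r s) : StEq (.lam x A (.pair r s)) (.pair (.lam x A r) (.lam x A s))
  | distApp (r s t) : StEq (.app (.pair r s) t) (.pair (.app r t) (.app s t))
  | curry (r s t) : StEq (.app r (.pair s t)) (.app (.app r s) t)
  | pcommII (X x A r) : X ∉ ftv A → StEq (.tlam X (.lam x A r)) (.lam x A (.tlam X r))
  | pcommEI (X x A B r) : X ∉ ftv A → StEq (.tapp (.lam x A r) B) (.lam x A (.tapp r B))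
  | pdistII (X r s) : StEq (.tlam X (.pair r s)) (.pair (.tlam X r) (.tlam X s))
  | pdistEI (r s A) : StEq (.tapp (.pair r s) A) (.pair (.tapp r A) (.tapp s A))
  | pdistIE (X A r) : StEq (.proj (.all X A) (.tlam X r)) (.tlam X (.proj A r))
  | pdistEE (X A B C r) : HasTy r (.all X (.conj B C)) →
      StEq (.tapp (.proj (.all X B) r) A) (.proj (substTy X A B) (.tapp r A))
  | symm {r s} : StEq r s → StEq s r
  | congLam (x A) {r s} : StEq r s → StEq (.lam x A r) (.lam x A s)
  | congAppL (t) {r s} : StEq r s → StEq (.app r t) (.app s t)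
  | congAppR (t) {r s} : StEq r s → StEq (.app t r) (.app t s)
  | congPairL (t) {r s} : StEq r s → StEq (.pair r t) (.pair s t)
  | congPairR (t) {r s} : StEq r s → StEq (.pair t r) (.pair t s)
  | congProj (A) {r s} : StEq r s → StEq (.proj A r) (.proj A s)
  | congTlam (X) {r s} : StEq r s → StEq (.tlam X r) (.tlam X s)
  | congTapp (A) {r s} : StEq r s → StEq (.tapp r A) (.tapp s A)

/-- One-step reduction ↪ (typed β-reductions and typed projection, closed under contexts). -/
inductive Red : Tm → Tm → Prop
  | beta (x A r s) : HasTy s A → Red (.app (.lam x A r) s) (substTm x s r)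
  | tbeta (X A r) : Red (.tapp (.tlam X r) A) (substTyTm X A r)
  | pi (A r s) : HasTy r A → Red (.proj A (.pair r s)) r
  | congLam (x A) {r s} : Red r s → Red (.lam x A r) (.lam x A s)
  | congAppL (t) {r s} : Red r s → Red (.app r t) (.app s t)
  | congAppR (t) {r s} : Red r s → Red (.app t r) (.app t s)
  | congPairL (t) {r s} : Red r s → Red (.pair r t) (.pair s t)
  | congPairR (t) {r s} : Red r s → Red (.pair t r) (.pair t s)
  | congProj (A) {r s} : Red r s → Red (.proj A r) (.proj A s)
  | congTlam (X) {r s} : Red r s → Red (.tlam X r) (.tlam X s)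
  | congTapp (A) {r s} : Red r s → Red (.tapp r A) (.tapp s A)

/-- ⇄*: reflexive-transitive closure of ⇄. -/
def SeqStar : Tm → Tm → Prop := Relation.ReflTransGen StEq

/-- The operational semantics → = ⇄* ∘ ↪ ∘ ⇄*. -/
def Step (r s : Tm) : Prop := ∃ r' s', SeqStar r r' ∧ Red r' s' ∧ SeqStar s' s

/-- Strong normalisation with respect to →. -/
def SN (r : Tm) : Prop := Acc (fun a b => Step b a) r

/-- The measure P on terms. -/
def Pm : Tm → ℕ
  | .var _ _ => 0
  | .lam _ _ r => Pm r
  | .app r _ => Pm r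
  | .pair r s => 1 + Pm r + Pm s
  | .proj _ r => Pm r
  | .tlam _ r => Pm r
  | .tapp r _ => Pm r

/-- The measure M on terms. -/
def Mm : Tm → ℕ
  | .var _ _ => 1
  | .lam _ _ r => 1 + Mm r + Pm r
  | .app r s => Mm r + Mm s + Pm r * Mm s
  | .pair r s => Mm r + Mm s
  | .proj _ r => 1 + Mm r + Pm r
  | .tlam _ r => 1 + Mm r + Pm r
  | .tapp r _ => 1 + Mm r + Pm r


theorem P_invariant (r s : Tm) (h : StEq r s) : Pm r = Pm s := by
  induction h <;> simp_all [Pm] <;> ring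

/-- M is invariant under structural equivalence. -/
theorem M_invariant (r s : Tm) (h : StEq r s) : Mm r = Mm s := by
  induction h with
  | symm h ih => omega
  | congAppL t h ih => simp [Mm, P_invariant _ _ h, ih]
  | congAppR t h ih => simp [Mm, ih]
  | congLam x A h ih => simp [Mm, ih, P_invariant _ _ h]
  | congProj A h ih => simp [Mm, ih, P_invariant _ _ h]
  | congTlam X h ih => simp [Mm, ih, P_invariant _ _ h]
  | congTapp A h ih => simp [Mm, ih, P_invariant _ _ h]
  | congPairL t h ih => simp [Mm, ih]
  | congPairR t h ih => simp [Mm, ih]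
  | _ => (simp_all [Mm, Pm]; try ring)
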